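/- arXiv:1903.04887 — 3 statements merged into one kernel-verified Lean document; each statement's English description precedes it below -/
import Mathlib

section
/- The quickest misinformation detection problem is equivalent to a fully observable Markov optimal stopping problem in the posterior: the infimum, over all a.s. finite stopping times T ≥ 1 with E[T] < ∞ (with respect to the filtration (F_k)) and all F_T-measurable decisions δ_T : Ω → {0,1}, of the total cost c_I·P(δ_T = 1 and Θ = 0) + c_II·P(δ_T = 0 and Θ = 1) + c·E[T·1_{Θ=1}] equals the infimum, over all a.s. finite stopping times T ≥ 1 with E[T] < ∞, of E[min{c_II·Π_T, c_I·(1 − Π_T)} + c·T·Π_T]. -/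
open MeasureTheory ProbabilityTheory

noncomputable section

variable {Ω : Type} [MeasurableSpace Ω]

/-- The natural filtration generated by the observations `Z 1, …, Z k`
(1-based indexing; `Z 0` plays no role). -/
def qsFiltration (Z : ℕ → Ω → Fin 4) (hZ : ∀ k, Measurable (Z k)) :
    Filtration ℕ (inferInstance : MeasurableSpace Ω) where
  seq k := ⨆ j ∈ Set.Icc 1 k, MeasurableSpace.comap (Z j) inferInstance
  mono' i j hij := biSup_mono fun j' hj' => Set.Icc_subset_Icc_right hij hj'
  le' k := iSup₂_le fun j _ => (hZ j).comap_le

/-- `qsPosterior P Θ Z hZ k` is (a version of) the conditional probability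
`P(Θ = 1 | Z 1, …, Z k)`, realized as the conditional expectation of the
indicator of `{Θ = 1}` given the natural filtration of `Z` at time `k`. -/
def qsPosterior (P : Measure Ω) (Θ : Ω → Fin 2) (Z : ℕ → Ω → Fin 4)
    (hZ : ∀ k, Measurable (Z k)) (k : ℕ) : Ω → ℝ :=
  P[fun ω => if Θ ω = 1 then (1 : ℝ) else 0 | qsFiltration Z hZ k]

/-- `P` is the law under which `Θ = 1` with probability `π₁`, `Θ = 0` with probability
`1 - π₁`, and conditionally on `Θ = i` the process `Z 1, Z 2, …` is a time-homogeneous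
Markov chain with transition probabilities `α i (·|·)` and `Z 1` uniform on `Fin 4`,
expressed through its finite-dimensional distributions. -/
def IsQSLaw (P : Measure Ω) (Θ : Ω → Fin 2) (Z : ℕ → Ω → Fin 4)
    (α : Fin 2 → Fin 4 → Fin 4 → ℝ) (π₁ : ℝ) : Prop :=
  ∀ k : ℕ, 1 ≤ k → ∀ (i : Fin 2) (zs : ℕ → Fin 4),
    (P {ω | Θ ω = i ∧ ∀ j, 1 ≤ j → j ≤ k → Z j ω = zs j}).toReal
      = (if i = 1 then π₁ else 1 - π₁) * (1 / 4) *
          ∏ j ∈ Finset.Ico 1 k, α i (zs (j + 1)) (zs j)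

/-- `P` is the law under which `Θ = 1` with probability `π`, and conditionally on `Θ = i`
the process `Z 1, Z 2, …` is a Markov chain with transition probabilities `α i (·|·)`
started from `Z 1 = z`. -/
def IsQSLawFrom (P : Measure Ω) (Θ : Ω → Fin 2) (Z : ℕ → Ω → Fin 4)
    (α : Fin 2 → Fin 4 → Fin 4 → ℝ) (π : ℝ) (z : Fin 4) : Prop :=
  ∀ k : ℕ, 1 ≤ k → ∀ (i : Fin 2) (zs : ℕ → Fin 4),
    (P {ω | Θ ω = i ∧ ∀ j, 1 ≤ j → j ≤ k → Z j ω = zs j}).toReal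
      = if zs 1 = z then
          (if i = 1 then π else 1 - π) * ∏ j ∈ Finset.Ico 1 k, α i (zs (j + 1)) (zs j)
        else 0

/-- The immediate stopping cost `g(π) = min (c_II π) (c_I (1 - π))`. -/
def qsG (cI cII : ℝ) (π : ℝ) : ℝ := min (cII * π) (cI * (1 - π))

/-- The value function `s₁(π, z)`: the infimum over a.s. finite stopping times `T ≥ 1`
with `E[T] < ∞` of `E_{π,z}[g(Π_T) + c T Π_T]`, for the chain with prior belief `π`
and initial observation `z` whose law is `Pf π z`. -/
def qsValue (Pf : ℝ → Fin 4 → Measure Ω) (Θ : Ω → Fin 2) (Z : ℕ → Ω → Fin 4)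
    (hZ : ∀ k, Measurable (Z k)) (cI cII c : ℝ) (π : ℝ) (z : Fin 4) : ℝ :=
  sInf {x : ℝ | ∃ T : Ω → ℕ, IsStoppingTime (qsFiltration Z hZ) (fun ω => (T ω : WithTop ℕ)) ∧ (∀ ω, 1 ≤ T ω) ∧
    Integrable (fun ω => (T ω : ℝ)) (Pf π z) ∧
    x = ∫ ω, (qsG cI cII (qsPosterior (Pf π z) Θ Z hZ (T ω) ω)
          + c * (T ω : ℝ) * qsPosterior (Pf π z) Θ Z hZ (T ω) ω) ∂(Pf π z)}

/-!
Because the decision `δ` is `F_T`-measurable and the loss `ℓ(δ, 1_{Θ = 1}) + c T 1_{Θ = 1}`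
is affine in the indicator with `F_T`-measurable coefficients, conditioning on `F_T` replaces
the indicator by the stopped posterior `Π_T`, which is a version of `P(Θ = 1 | F_T)`. The cost of
`(T, δ)` is therefore `E[ℓ(δ, Π_T) + c T Π_T]`, where `ℓ(1, p) = c_I (1 - p)` and
`ℓ(0, p) = c_II p`; this is minimised pointwise by the Bayes rule, which picks the smaller of
`c_II Π_T` and `c_I (1 - Π_T)`.
-/

section StoppedCondExp

variable {Ω : Type*} {m0 : MeasurableSpace Ω} {μ : Measure Ω} {ℱ : Filtration ℕ m0} {τ : Ω → ℕ}

theorem MeasureTheory.IsStoppingTime.measurable_nat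
    (hτ : IsStoppingTime ℱ (fun ω => (τ ω : WithTop ℕ))) : Measurable[hτ.measurableSpace] τ :=
  @measurable_to_countable' ℕ Ω _ _ hτ.measurableSpace τ fun k => by
    have hk : {ω | (τ ω : WithTop ℕ) = k} = τ ⁻¹' {k} := by ext; simp
    exact hk ▸ hτ.measurableSet_eq_of_countable' k

theorem measurable_condExp_stopping_time (hτ : IsStoppingTime ℱ (fun ω => (τ ω : WithTop ℕ)))
    (X : Ω → ℝ) : Measurable[hτ.measurableSpace] fun ω => μ[X | ℱ (τ ω)] ω :=
  have hadapted : StronglyAdapted ℱ fun k => μ[X | ℱ k] := fun _ => stronglyMeasurable_condExp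
  measurable_stoppedValue hadapted.isStronglyProgressive_of_discrete hτ

theorem ae_abs_condExp_random_time_le {X : Ω → ℝ} {R : ℝ} (hX : ∀ᵐ ω ∂μ, |X ω| ≤ R) :
    ∀ᵐ ω ∂μ, |μ[X | ℱ (τ ω)] ω| ≤ R := by
  filter_upwards [ae_all_iff.2 fun k => ae_bdd_abs_condExp_of_ae_bdd_abs (m := ℱ k) hX] with ω h
  exact h (τ ω)

variable [IsFiniteMeasure μ]

theorem condExp_stopping_time_ae_eq_condExp_apply
    (hτ : IsStoppingTime ℱ (fun ω => (τ ω : WithTop ℕ))) (X : Ω → ℝ) :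
    μ[X | hτ.measurableSpace] =ᵐ[μ] fun ω => μ[X | ℱ (τ ω)] ω := by
  have hcover : (⋃ k : ℕ, {ω | (τ ω : WithTop ℕ) = k}) = Set.univ :=
    Set.iUnion_eq_univ_iff.2 fun ω => ⟨τ ω, rfl⟩
  suffices h : μ[X | hτ.measurableSpace] =ᵐ[μ.restrict (⋃ k : ℕ, {ω | (τ ω : WithTop ℕ) = k})]
      fun ω => μ[X | ℱ (τ ω)] ω by
    rwa [hcover, Measure.restrict_univ] at h
  refine (ae_eq_restrict_iUnion_iff _ _ _).2 fun k => ?_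
  have hk := ℱ.le k _ (hτ.measurableSet_eq k)
  filter_upwards [condExp_stopping_time_ae_eq_restrict_eq_of_countable (f := X) hτ k,
    ae_restrict_mem hk] with ω hω hτk
  rw [hω, show τ ω = k by exact_mod_cast hτk]

theorem integral_mul_condExp_stopping_time
    (hτ : IsStoppingTime ℱ (fun ω => (τ ω : WithTop ℕ))) {b X : Ω → ℝ}
    (hb : StronglyMeasurable[hτ.measurableSpace] b) (hX : Integrable X μ)
    (hbX : Integrable (b * X) μ) :
    ∫ ω, b ω * μ[X | ℱ (τ ω)] ω ∂μ = ∫ ω, b ω * X ω ∂μ :=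
  calc ∫ ω, b ω * μ[X | ℱ (τ ω)] ω ∂μ = ∫ ω, (b * μ[X | hτ.measurableSpace]) ω ∂μ :=
        integral_congr_ae ((condExp_stopping_time_ae_eq_condExp_apply hτ X).mono
          fun ω h => by simp [h])
    _ = ∫ ω, μ[b * X | hτ.measurableSpace] ω ∂μ :=
        integral_congr_ae (condExp_mul_of_stronglyMeasurable_left hb hbX hX).symm
    _ = ∫ ω, b ω * X ω ∂μ := integral_condExp (f := b * X) hτ.measurableSpace_le

end StoppedCondExp

section BayesDecision

def bayesLoss (cI cII : ℝ) (d : Fin 2) (p : ℝ) : ℝ := if d = 1 then cI * (1 - p) else cII * p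

def bayesDecision (cI cII p : ℝ) : Fin 2 := if cII * p ≤ cI * (1 - p) then 0 else 1

theorem min_le_bayesLoss (cI cII p : ℝ) (d : Fin 2) :
    min (cII * p) (cI * (1 - p)) ≤ bayesLoss cI cII d p := by
  unfold bayesLoss
  split_ifs
  · exact min_le_right _ _
  · exact min_le_left _ _

theorem bayesLoss_bayesDecision (cI cII p : ℝ) :
    bayesLoss cI cII (bayesDecision cI cII p) p = min (cII * p) (cI * (1 - p)) := by
  by_cases h : cII * p ≤ cI * (1 - p)
  · simp [bayesLoss, bayesDecision, h]
  · simp [bayesLoss, bayesDecision, h, (not_le.1 h).le]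

theorem measurable_bayesDecision (cI cII : ℝ) : Measurable (bayesDecision cI cII) :=
  Measurable.ite (measurableSet_le (by fun_prop) (by fun_prop)) measurable_const measurable_const

theorem bayesLoss_add_mul_eq (cI cII c : ℝ) (d : Fin 2) (t p : ℝ) :
    bayesLoss cI cII d p + c * t * p
      = bayesLoss cI cII d 0 + (bayesLoss cI cII d 1 - bayesLoss cI cII d 0 + c * t) * p := by
  unfold bayesLoss
  split_ifs <;> ring

theorem bayesLoss_indicator (cI cII : ℝ) (d θ : Fin 2) :
    bayesLoss cI cII d (if θ = 1 then 1 else 0)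
      = cI * (if d = 1 ∧ θ = 0 then 1 else 0) + cII * (if d = 0 ∧ θ = 1 then 1 else 0) := by
  fin_cases d <;> fin_cases θ <;> simp [bayesLoss]

end BayesDecision

section BayesRisk

variable {Ω : Type*} {m0 : MeasurableSpace Ω} {μ : Measure Ω} [IsFiniteMeasure μ]
  {τ : Ω → ℕ} {δ : Ω → Fin 2} {Y : Ω → ℝ}

theorem integrable_comp_of_finite {β : Type*} [Finite β] [MeasurableSpace β]
    [MeasurableSingletonClass β] (g : β → ℝ) {f : Ω → β} (hf : Measurable f) :
    Integrable (fun ω => g (f ω)) μ :=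
  Integrable.of_finite.comp_measurable hf

theorem integrable_bayesLoss_coeff (cI cII c : ℝ) (hτ : Integrable (fun ω => (τ ω : ℝ)) μ)
    (hδ : Measurable δ) :
    Integrable (fun ω => bayesLoss cI cII (δ ω) 1 - bayesLoss cI cII (δ ω) 0 + c * τ ω) μ :=
  (integrable_comp_of_finite (fun d => bayesLoss cI cII d 1 - bayesLoss cI cII d 0) hδ).add
    (hτ.const_mul c)

theorem integrable_bayesLoss_add_mul (cI cII c : ℝ) (hτ : Integrable (fun ω => (τ ω : ℝ)) μ)
    (hδ : Measurable δ) (hY : AEStronglyMeasurable Y μ) (hY1 : ∀ᵐ ω ∂μ, |Y ω| ≤ 1) :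
    Integrable (fun ω => bayesLoss cI cII (δ ω) (Y ω) + c * τ ω * Y ω) μ := by
  simp_rw [bayesLoss_add_mul_eq]
  exact (integrable_comp_of_finite (fun d => bayesLoss cI cII d 0) hδ).add
    ((integrable_bayesLoss_coeff cI cII c hτ hδ).mul_bdd hY hY1)

theorem integral_min_add_le_integral_bayesLoss (cI cII c : ℝ)
    (hτ : Integrable (fun ω => (τ ω : ℝ)) μ) (hδ : Measurable δ) (hY : Measurable Y)
    (hY1 : ∀ᵐ ω ∂μ, |Y ω| ≤ 1) :
    ∫ ω, (min (cII * Y ω) (cI * (1 - Y ω)) + c * τ ω * Y ω) ∂μ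
      ≤ ∫ ω, (bayesLoss cI cII (δ ω) (Y ω) + c * τ ω * Y ω) ∂μ := by
  have hmin : Integrable (fun ω => min (cII * Y ω) (cI * (1 - Y ω)) + c * τ ω * Y ω) μ :=
    (integrable_bayesLoss_add_mul cI cII c hτ ((measurable_bayesDecision cI cII).comp hY)
      hY.aestronglyMeasurable hY1).congr
      (ae_of_all _ fun ω => by simp only [Function.comp_apply, bayesLoss_bayesDecision])
  exact integral_mono hmin
    (integrable_bayesLoss_add_mul cI cII c hτ hδ hY.aestronglyMeasurable hY1)
    fun ω => add_le_add_left (min_le_bayesLoss cI cII (Y ω) (δ ω)) _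

theorem integral_bayesLoss_condExp_stopping_time {ℱ : Filtration ℕ m0}
    (hτ : IsStoppingTime ℱ (fun ω => (τ ω : WithTop ℕ)))
    (hτi : Integrable (fun ω => (τ ω : ℝ)) μ) (hδ : Measurable[hτ.measurableSpace] δ)
    (hY : AEStronglyMeasurable Y μ) (hY1 : ∀ᵐ ω ∂μ, |Y ω| ≤ 1) (cI cII c : ℝ) :
    ∫ ω, (bayesLoss cI cII (δ ω) (μ[Y | ℱ (τ ω)] ω) + c * τ ω * μ[Y | ℱ (τ ω)] ω) ∂μ
      = ∫ ω, (bayesLoss cI cII (δ ω) (Y ω) + c * τ ω * Y ω) ∂μ := by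
  have hδ' := hδ.mono hτ.measurableSpace_le le_rfl
  have hb : Measurable[hτ.measurableSpace]
      fun ω => bayesLoss cI cII (δ ω) 1 - bayesLoss cI cII (δ ω) 0 + c * τ ω :=
    ((measurable_of_finite fun d => bayesLoss cI cII d 1 - bayesLoss cI cII d 0).comp hδ).add
      (measurable_const.mul (measurable_from_nat.comp hτ.measurable_nat))
  have hbY := (integrable_bayesLoss_coeff cI cII c hτi hδ').mul_bdd hY hY1
  simp_rw [bayesLoss_add_mul_eq]
  rw [integral_add (integrable_comp_of_finite (fun d => bayesLoss cI cII d 0) hδ') ?_,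
    integral_add (integrable_comp_of_finite (fun d => bayesLoss cI cII d 0) hδ') hbY,
    integral_mul_condExp_stopping_time hτ hb.stronglyMeasurable (Integrable.of_bound hY 1 hY1) hbY]
  exact (integrable_bayesLoss_coeff cI cII c hτi hδ').mul_bdd
    ((measurable_condExp_stopping_time hτ Y).mono hτ.measurableSpace_le le_rfl).aestronglyMeasurable
    (ae_abs_condExp_random_time_le hY1)

theorem bayesRisk_eq_integral_bayesLoss {Θ : Ω → Fin 2} (hΘ : Measurable Θ) (hδ : Measurable δ)
    (hτ : Integrable (fun ω => (τ ω : ℝ)) μ) (cI cII c : ℝ) :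
    cI * (μ {ω | δ ω = 1 ∧ Θ ω = 0}).toReal + cII * (μ {ω | δ ω = 0 ∧ Θ ω = 1}).toReal
        + c * ∫ ω, (τ ω : ℝ) * (if Θ ω = 1 then (1 : ℝ) else 0) ∂μ
      = ∫ ω, (bayesLoss cI cII (δ ω) (if Θ ω = 1 then 1 else 0)
          + c * τ ω * (if Θ ω = 1 then 1 else 0)) ∂μ := by
  have hset (i j : Fin 2) : MeasurableSet {ω | δ ω = i ∧ Θ ω = j} :=
    (hδ (measurableSet_singleton i)).inter (hΘ (measurableSet_singleton j))
  have hind (i j : Fin 2) : Integrable ({ω | δ ω = i ∧ Θ ω = j}.indicator (1 : Ω → ℝ)) μ :=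
    (integrable_const (1 : ℝ)).indicator (hset i j)
  have hτX : Integrable (fun ω => (τ ω : ℝ) * (if Θ ω = 1 then (1 : ℝ) else 0)) μ :=
    hτ.mul_bdd (integrable_comp_of_finite (fun θ : Fin 2 => if θ = 1 then (1 : ℝ) else 0) hΘ).1
      (c := 1) (ae_of_all _ fun ω => by split_ifs <;> simp)
  calc _ = ∫ ω, (cI * {ω | δ ω = 1 ∧ Θ ω = 0}.indicator 1 ω
          + cII * {ω | δ ω = 0 ∧ Θ ω = 1}.indicator 1 ω
          + c * ((τ ω : ℝ) * (if Θ ω = 1 then (1 : ℝ) else 0))) ∂μ := by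
        rw [integral_add ?_ (hτX.const_mul _), integral_add ((hind 1 0).const_mul _)
            ((hind 0 1).const_mul _), integral_const_mul, integral_const_mul, integral_const_mul,
          integral_indicator_one (hset 1 0), integral_indicator_one (hset 0 1), measureReal_def,
          measureReal_def]
        exact ((hind 1 0).const_mul _).add ((hind 0 1).const_mul _)
    _ = _ := integral_congr_ae (ae_of_all _ fun ω => by
        simp only [bayesLoss_indicator, Set.indicator_apply, Set.mem_ofPred_eq, Pi.one_apply]
        split_ifs <;> ring)

end BayesRisk

theorem quickstop_equivalence_markov_optimal_stopping_general
    {Ω : Type} [MeasurableSpace Ω] (P : Measure Ω) [IsProbabilityMeasure P]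
    (Θ : Ω → Fin 2) (Z : ℕ → Ω → Fin 4)
    (hΘ : Measurable Θ) (hZ : ∀ k, Measurable (Z k))
    (cI cII c : ℝ) :
    sInf {x : ℝ | ∃ T : Ω → ℕ, ∃ hT : IsStoppingTime (qsFiltration Z hZ) (fun ω => (T ω : WithTop ℕ)),
        (∀ ω, 1 ≤ T ω) ∧ Integrable (fun ω => (T ω : ℝ)) P ∧
        ∃ δ : Ω → Fin 2, Measurable[hT.measurableSpace] δ ∧
          x = cI * (P {ω | δ ω = 1 ∧ Θ ω = 0}).toReal
            + cII * (P {ω | δ ω = 0 ∧ Θ ω = 1}).toReal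
            + c * ∫ ω, (T ω : ℝ) * (if Θ ω = 1 then (1 : ℝ) else 0) ∂P}
      = sInf {x : ℝ | ∃ T : Ω → ℕ, IsStoppingTime (qsFiltration Z hZ) (fun ω => (T ω : WithTop ℕ)) ∧
          (∀ ω, 1 ≤ T ω) ∧ Integrable (fun ω => (T ω : ℝ)) P ∧
          x = ∫ ω, (min (cII * qsPosterior P Θ Z hZ (T ω) ω)
                (cI * (1 - qsPosterior P Θ Z hZ (T ω) ω))
              + c * (T ω : ℝ) * qsPosterior P Θ Z hZ (T ω) ω) ∂P} := by
  have hX : Measurable fun ω => if Θ ω = 1 then (1 : ℝ) else 0 :=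
    (measurable_of_finite fun θ : Fin 2 => if θ = 1 then (1 : ℝ) else 0).comp hΘ
  have hX1 : ∀ᵐ ω ∂P, |if Θ ω = 1 then (1 : ℝ) else 0| ≤ 1 :=
    ae_of_all _ fun ω => by split_ifs <;> simp
  apply csInf_eq_csInf_of_forall_exists_le
  · rintro _ ⟨T, hT, hT1, hTi, δ, hδ, rfl⟩
    refine ⟨_, ⟨T, hT, hT1, hTi, rfl⟩, ?_⟩
    have hδ' := hδ.mono hT.measurableSpace_le le_rfl
    rw [bayesRisk_eq_integral_bayesLoss hΘ hδ' hTi,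
      ← integral_bayesLoss_condExp_stopping_time hT hTi hδ hX.aestronglyMeasurable hX1]
    exact integral_min_add_le_integral_bayesLoss cI cII c hTi hδ'
      ((measurable_condExp_stopping_time hT _).mono hT.measurableSpace_le le_rfl)
      (ae_abs_condExp_random_time_le hX1)
  · rintro _ ⟨T, hT, hT1, hTi, rfl⟩
    have hδ := (measurable_bayesDecision cI cII).comp (measurable_condExp_stopping_time (μ := P) hT
      fun ω => if Θ ω = 1 then (1 : ℝ) else 0)
    refine ⟨_, ⟨T, hT, hT1, hTi, _, hδ, rfl⟩, le_of_eq ?_⟩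
    rw [bayesRisk_eq_integral_bayesLoss hΘ (hδ.mono hT.measurableSpace_le le_rfl) hTi,
      ← integral_bayesLoss_condExp_stopping_time hT hTi hδ hX.aestronglyMeasurable hX1]
    simp only [Function.comp_apply, bayesLoss_bayesDecision]
    rfl

/-- The quickest misinformation detection problem is equivalent to a
fully observable Markov optimal stopping problem in the posterior: the infimum, over all
a.s. finite stopping times `T ≥ 1` with `E[T] < ∞` (with respect to the filtration
`(F_k)`) and all `F_T`-measurable decisions `δ_T : Ω → {0,1}`, of the total cost
`c_I P(δ_T = 1, Θ = 0) + c_II P(δ_T = 0, Θ = 1) + c E[T 1_{Θ=1}]` equals the infimum,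
over all a.s. finite stopping times `T ≥ 1` with `E[T] < ∞`, of
`E[min (c_II Π_T) (c_I (1 - Π_T)) + c T Π_T]`. -/
theorem quickstop_equivalence_markov_optimal_stopping
    {Ω : Type} [MeasurableSpace Ω] (P : Measure Ω) [IsProbabilityMeasure P]
    (Θ : Ω → Fin 2) (Z : ℕ → Ω → Fin 4)
    (hΘ : Measurable Θ) (hZ : ∀ k, Measurable (Z k))
    (α : Fin 2 → Fin 4 → Fin 4 → ℝ)
    (hαpos : ∀ i z z', 0 < α i z' z)
    (hαsum : ∀ i z, ∑ z', α i z' z = 1)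
    (π₁ : ℝ) (hπ : π₁ ∈ Set.Ioo (0 : ℝ) 1)
    (hlaw : IsQSLaw P Θ Z α π₁)
    (cI cII c : ℝ) (hcI : 0 < cI) (hcII : 0 < cII) (hc : 0 < c) :
    sInf {x : ℝ | ∃ T : Ω → ℕ, ∃ hT : IsStoppingTime (qsFiltration Z hZ) (fun ω => (T ω : WithTop ℕ)),
        (∀ ω, 1 ≤ T ω) ∧ Integrable (fun ω => (T ω : ℝ)) P ∧
        ∃ δ : Ω → Fin 2, Measurable[hT.measurableSpace] δ ∧
          x = cI * (P {ω | δ ω = 1 ∧ Θ ω = 0}).toReal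
            + cII * (P {ω | δ ω = 0 ∧ Θ ω = 1}).toReal
            + c * ∫ ω, (T ω : ℝ) * (if Θ ω = 1 then (1 : ℝ) else 0) ∂P}
      = sInf {x : ℝ | ∃ T : Ω → ℕ, IsStoppingTime (qsFiltration Z hZ) (fun ω => (T ω : WithTop ℕ)) ∧
          (∀ ω, 1 ≤ T ω) ∧ Integrable (fun ω => (T ω : ℝ)) P ∧
          x = ∫ ω, (min (cII * qsPosterior P Θ Z hZ (T ω) ω)
                (cI * (1 - qsPosterior P Θ Z hZ (T ω) ω))
              + c * (T ω : ℝ) * qsPosterior P Θ Z hZ (T ω) ω) ∂P} :=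
  quickstop_equivalence_markov_optimal_stopping_general P Θ Z hΘ hZ cI cII c

end
end

section
/- The belief-state pair (Π_k, Z_k) is a Markov chain with an explicit, time-homogeneous transition law: for every k ≥ 1 and every bounded measurable function f : [0,1] × Fin 4 → ℝ, P-almost surely E[f(Π_{k+1}, Z_{k+1}) | F_k] = Σ_{z'=0}^{3} f( Π_k·α_1(z'|Z_k) / (Π_k·α_1(z'|Z_k) + (1 − Π_k)·α_0(z'|Z_k)) , z' ) · ( Π_k·α_1(z'|Z_k) + (1 − Π_k)·α_0(z'|Z_k) ); in particular this conditional expectation is a fixed function of (Π_k, Z_k) not depending on k. -/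
/-!
The σ-algebra `F_k` is generated by the finite-valued vector `(Z_1, …, Z_k)`, so a conditional
expectation given `F_k` is computed atom by atom, and null atoms impose no condition. On the atom
`{Z_j = z_j, 1 ≤ j ≤ k}` Bayes' rule gives `Π_k = π₁ L₁ / (π₁ L₁ + (1 - π₁) L₀)`, where `L_i` is the
likelihood of the observed path under `Θ = i`. Appending an observation `z'` multiplies `L_i` by
`α_i(z'|z_k)`, which turns `Π_{k+1}` into the Bayes update of `Π_k` and the conditional
probability of `Z_{k+1} = z'` into the predictive weight `Π_k α₁(z'|z_k) + (1 - Π_k) α₀(z'|z_k)`.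
-/


open MeasureTheory ProbabilityTheory

section FiniteConditioning

variable {Ω : Type*} [MeasurableSpace Ω]

theorem setIntegral_eq_sum_setIntegral_preimage_inter {β : Type*} [Fintype β]
    [MeasurableSpace β] [MeasurableSingletonClass β] {μ : Measure Ω} {Y : Ω → β}
    (hY : Measurable Y) {A : Set Ω} {g : Ω → ℝ} (hg : IntegrableOn g A μ) :
    ∫ ω in A, g ω ∂μ = ∑ y, ∫ ω in Y ⁻¹' {y} ∩ A, g ω ∂μ := by
  have hcover : (⋃ y, Y ⁻¹' {y}) = Set.univ := Set.iUnion_eq_univ_iff.2 fun ω => ⟨Y ω, rfl⟩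
  rw [← Measure.restrict_univ (μ := μ.restrict A), ← hcover,
    integral_iUnion_fintype (fun y => hY (measurableSet_singleton y)) (pairwise_disjoint_fiber Y)
      fun _ => hg.integrable.integrableOn]
  exact Finset.sum_congr rfl fun y _ => by
    rw [Measure.restrict_restrict (hY (measurableSet_singleton y))]

theorem condExp_comap_ae_eq_of_setIntegral_fiber {ι : Type*} [Fintype ι] [MeasurableSpace ι]
    [MeasurableSingletonClass ι] {μ : Measure Ω} [IsFiniteMeasure μ] {W : Ω → ι}
    (hW : Measurable W) {g : Ω → ℝ} (hg : Integrable g μ) (G : ι → ℝ)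
    (hG : ∀ v, μ.real (W ⁻¹' {v}) ≠ 0 →
      ∫ ω in W ⁻¹' {v}, g ω ∂μ = G v * μ.real (W ⁻¹' {v})) :
    μ[g | MeasurableSpace.comap W inferInstance] =ᵐ[μ] fun ω => G (W ω) := by
  have hGW : Integrable (fun ω => G (W ω)) μ := Integrable.of_finite.comp_measurable hW
  have hfiber : ∀ v, ∫ ω in W ⁻¹' {v}, G (W ω) ∂μ = ∫ ω in W ⁻¹' {v}, g ω ∂μ := by
    intro v
    rw [setIntegral_congr_fun (hW (measurableSet_singleton v)) fun ω hω => congrArg G hω,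
      setIntegral_const, smul_eq_mul, mul_comm]
    by_cases hv : μ.real (W ⁻¹' {v}) = 0
    · rw [hv, mul_zero, setIntegral_measure_zero _ ((measureReal_eq_zero_iff).1 hv)]
    · exact (hG v hv).symm
  refine (ae_eq_condExp_of_forall_setIntegral_eq hW.comap_le hg
    (fun _ _ _ => hGW.integrableOn) ?_ ?_).symm
  · rintro _ ⟨S, -, rfl⟩ -
    rw [setIntegral_eq_sum_setIntegral_preimage_inter hW hGW.integrableOn,
      setIntegral_eq_sum_setIntegral_preimage_inter hW hg.integrableOn]
    refine Finset.sum_congr rfl fun v _ => ?_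
    by_cases hv : v ∈ S
    · rw [Set.inter_eq_left.2 (Set.preimage_mono (Set.singleton_subset_iff.2 hv)), hfiber v]
    · rw [← Set.preimage_inter, Set.singleton_inter_eq_empty.2 hv, Set.preimage_empty,
        Measure.restrict_empty, integral_zero_measure, integral_zero_measure]
  · exact ((measurable_of_finite G).comp (comap_measurable W)).aestronglyMeasurable

end FiniteConditioning

section BayesUpdate

variable {S : Type*} (α : Fin 2 → S → S → ℝ) (π₁ : ℝ)

noncomputable def pathLikelihood (i : Fin 2) (k : ℕ) (zs : ℕ → S) : ℝ :=
  ∏ j ∈ Finset.Ico 1 k, α i (zs (j + 1)) (zs j)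

noncomputable def pathEvidence (k : ℕ) (zs : ℕ → S) : ℝ :=
  π₁ * pathLikelihood α 1 k zs + (1 - π₁) * pathLikelihood α 0 k zs

noncomputable def pathPosterior (k : ℕ) (zs : ℕ → S) : ℝ :=
  π₁ * pathLikelihood α 1 k zs / pathEvidence α π₁ k zs

noncomputable def beliefWeight (p : ℝ) (z z' : S) : ℝ :=
  p * α 1 z' z + (1 - p) * α 0 z' z

noncomputable def beliefUpdate (p : ℝ) (z z' : S) : ℝ :=
  p * α 1 z' z / beliefWeight α p z z'

noncomputable def beliefTransition [Fintype S] (f : ℝ × S → ℝ) (p : ℝ) (z : S) : ℝ :=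
  ∑ z', f (beliefUpdate α p z z', z') * beliefWeight α p z z'

variable {α π₁}

theorem pathLikelihood_congr {i : Fin 2} {k : ℕ} {zs zs' : ℕ → S}
    (h : Set.EqOn zs zs' (Set.Icc 1 k)) :
    pathLikelihood α i k zs = pathLikelihood α i k zs' :=
  Finset.prod_congr rfl fun j hj => by
    obtain ⟨hj1, hjk⟩ := Finset.mem_Ico.1 hj
    rw [h ⟨hj1, hjk.le⟩, h ⟨by omega, hjk⟩]

theorem pathPosterior_congr {k : ℕ} {zs zs' : ℕ → S} (h : Set.EqOn zs zs' (Set.Icc 1 k)) :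
    pathPosterior α π₁ k zs = pathPosterior α π₁ k zs' := by
  simp only [pathPosterior, pathEvidence, pathLikelihood_congr h]

theorem pathLikelihood_update_succ (i : Fin 2) {k : ℕ} (hk : 1 ≤ k) (zs : ℕ → S) (z' : S) :
    pathLikelihood α i (k + 1) (Function.update zs (k + 1) z')
      = pathLikelihood α i k zs * α i z' (zs k) := by
  rw [pathLikelihood, Finset.prod_Ico_succ_top hk, Function.update_self,
    Function.update_of_ne (by omega)]
  congr 1
  refine Finset.prod_congr rfl fun j hj => ?_
  obtain ⟨-, hjk⟩ := Finset.mem_Ico.1 hj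
  rw [Function.update_of_ne (by omega), Function.update_of_ne (by omega)]

theorem pathEvidence_update_succ {k : ℕ} (hk : 1 ≤ k) {zs : ℕ → S}
    (hD : pathEvidence α π₁ k zs ≠ 0) (z' : S) :
    pathEvidence α π₁ (k + 1) (Function.update zs (k + 1) z')
      = pathEvidence α π₁ k zs * beliefWeight α (pathPosterior α π₁ k zs) (zs k) z' := by
  rw [pathEvidence] at hD
  rw [beliefWeight, pathPosterior, pathEvidence, pathEvidence, pathLikelihood_update_succ 1 hk,
    pathLikelihood_update_succ 0 hk]
  field_simp
  ring

theorem pathPosterior_update_succ {k : ℕ} (hk : 1 ≤ k) {zs : ℕ → S}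
    (hD : pathEvidence α π₁ k zs ≠ 0) (z' : S) :
    pathPosterior α π₁ (k + 1) (Function.update zs (k + 1) z')
      = beliefUpdate α (pathPosterior α π₁ k zs) (zs k) z' := by
  rw [beliefUpdate, ← mul_div_mul_left _ _ hD, ← pathEvidence_update_succ hk hD,
    pathPosterior, pathLikelihood_update_succ 1 hk, pathPosterior]
  field_simp

end BayesUpdate

section Observations

variable {Ω : Type}

def pathCylinder (Z : ℕ → Ω → Fin 4) (k : ℕ) (zs : ℕ → Fin 4) : Set Ω :=
  {ω | Set.EqOn (fun j => Z j ω) zs (Set.Icc 1 k)}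

def observations (Z : ℕ → Ω → Fin 4) (k : ℕ) (ω : Ω) : Fin k → Fin 4 :=
  fun j => Z (j + 1) ω

/-- Paths are indexed from `1`, like `Z`: `toPath v (i + 1) = v i`, and index `0` is junk. -/
def toPath {k : ℕ} (v : Fin k → Fin 4) (j : ℕ) : Fin 4 :=
  if h : j - 1 < k then v ⟨j - 1, h⟩ else 0

variable {Z : ℕ → Ω → Fin 4}

theorem measurableSet_pathCylinder [MeasurableSpace Ω] (hZ : ∀ k, Measurable (Z k)) (k : ℕ)
    (zs : ℕ → Fin 4) : MeasurableSet (pathCylinder Z k zs) := by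
  simp only [pathCylinder, Set.EqOn, Set.ofPred_forall]
  exact .iInter fun j => .iInter fun _ => hZ j (measurableSet_singleton _)

theorem pathCylinder_succ (k : ℕ) (zs : ℕ → Fin 4) (z' : Fin 4) :
    pathCylinder Z (k + 1) (Function.update zs (k + 1) z')
      = pathCylinder Z k zs ∩ Z (k + 1) ⁻¹' {z'} := by
  ext ω
  simp only [pathCylinder, Set.EqOn, Set.mem_Icc, Set.mem_inter_iff, Set.mem_ofPred_eq,
    Set.mem_preimage, Set.mem_singleton_iff]
  constructor
  · intro h
    refine ⟨fun j hj => ?_, ?_⟩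
    · rw [h ⟨hj.1, by omega⟩, Function.update_of_ne (by omega)]
    · simpa using h ⟨by omega, le_rfl⟩
  · rintro ⟨h, hz⟩ j ⟨hj1, hjk⟩
    rcases (show j ≤ k ∨ j = k + 1 by omega) with hj | rfl
    · rw [Function.update_of_ne (by omega), h ⟨hj1, hj⟩]
    · rw [Function.update_self, hz]

theorem toPath_add_one {k : ℕ} (v : Fin k → Fin 4) (i : Fin k) : toPath v (i + 1) = v i := by
  simp [toPath]

theorem observations_preimage_singleton {k : ℕ} (v : Fin k → Fin 4) :
    observations Z k ⁻¹' {v} = pathCylinder Z k (toPath v) := by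
  ext ω
  simp only [Set.mem_preimage, Set.mem_singleton_iff, pathCylinder, Set.EqOn, Set.mem_Icc,
    Set.mem_ofPred_eq, funext_iff, observations]
  constructor
  · rintro h j ⟨hj1, hjk⟩
    obtain ⟨i, rfl⟩ : ∃ i : Fin k, j = i + 1 := ⟨⟨j - 1, by omega⟩, by simp; omega⟩
    rw [h i, toPath_add_one]
  · intro h i
    rw [h ⟨by omega, by omega⟩, toPath_add_one]

theorem qsFiltration_eq_comap [MeasurableSpace Ω] (hZ : ∀ k, Measurable (Z k)) (k : ℕ) :
    qsFiltration Z hZ k = MeasurableSpace.comap (observations Z k) inferInstance := by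
  apply le_antisymm
  · refine iSup₂_le fun j ⟨hj1, hjk⟩ => ?_
    have hZj : Z j = (fun v : Fin k → Fin 4 => v ⟨j - 1, by omega⟩) ∘ observations Z k := by
      funext ω
      simp only [observations, Function.comp_apply]
      congr
      omega
    rw [hZj]
    exact ((measurable_of_finite _).comp (comap_measurable _)).comap_le
  · have hW : Measurable[qsFiltration Z hZ k] (observations Z k) :=
      @measurable_pi_lambda Ω (Fin k) (fun _ => Fin 4) (qsFiltration Z hZ k) _ _ fun i =>
        (comap_measurable (Z (i + 1))).mono
          (le_biSup (fun j => MeasurableSpace.comap (Z j) inferInstance)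
            (Set.mem_Icc.2 ⟨by omega, by omega⟩)) le_rfl
    exact hW.comap_le


theorem measurable_observations [MeasurableSpace Ω] (hZ : ∀ k, Measurable (Z k)) (k : ℕ) :
    Measurable (observations Z k) :=
  measurable_pi_lambda _ fun _ => hZ _

theorem eqOn_toPath_observations {k : ℕ} (ω : Ω) :
    Set.EqOn (fun j => Z j ω) (toPath (observations Z k ω)) (Set.Icc 1 k) := by
  have hω : ω ∈ observations Z k ⁻¹' {observations Z k ω} := rfl
  rwa [observations_preimage_singleton] at hω

variable [MeasurableSpace Ω] {P : Measure Ω} [IsFiniteMeasure P]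

theorem integrable_comp_of_eqOn (hZ : ∀ k, Measurable (Z k)) {k : ℕ} {H : (ℕ → Fin 4) → ℝ}
    (hH : ∀ zs zs', Set.EqOn zs zs' (Set.Icc 1 k) → H zs = H zs') :
    Integrable (fun ω => H (fun j => Z j ω)) P := by
  have hfactor : (fun ω => H (fun j => Z j ω)) = (H ∘ toPath) ∘ observations Z k :=
    funext fun ω => hH _ _ (eqOn_toPath_observations ω)
  rw [hfactor]
  exact Integrable.of_finite.comp_measurable (measurable_observations hZ k)

theorem condExp_qsFiltration_ae_eq (hZ : ∀ k, Measurable (Z k)) {k : ℕ} {g : Ω → ℝ}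
    (hg : Integrable g P) {H : (ℕ → Fin 4) → ℝ}
    (hH : ∀ zs zs', Set.EqOn zs zs' (Set.Icc 1 k) → H zs = H zs')
    (hgH : ∀ zs, P.real (pathCylinder Z k zs) ≠ 0 →
      ∫ ω in pathCylinder Z k zs, g ω ∂P = H zs * P.real (pathCylinder Z k zs)) :
    P[g | qsFiltration Z hZ k] =ᵐ[P] fun ω => H (fun j => Z j ω) := by
  rw [qsFiltration_eq_comap]
  refine (condExp_comap_ae_eq_of_setIntegral_fiber (measurable_observations hZ k) hg
    (H ∘ toPath) fun v => ?_).trans (.of_forall fun ω => (hH _ _ (eqOn_toPath_observations ω)).symm)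
  rw [observations_preimage_singleton]
  exact hgH _

end Observations

section QuickstopLaw

variable {Ω : Type} [MeasurableSpace Ω] {P : Measure Ω} {Θ : Ω → Fin 2} {Z : ℕ → Ω → Fin 4}
  {α : Fin 2 → Fin 4 → Fin 4 → ℝ} {π₁ : ℝ}

theorem IsQSLaw.measureReal_preimage_inter_pathCylinder (hlaw : IsQSLaw P Θ Z α π₁) {k : ℕ}
    (hk : 1 ≤ k) (i : Fin 2) (zs : ℕ → Fin 4) :
    P.real (Θ ⁻¹' {i} ∩ pathCylinder Z k zs)
      = (if i = 1 then π₁ else 1 - π₁) * (1 / 4) * pathLikelihood α i k zs := by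
  have hset : Θ ⁻¹' {i} ∩ pathCylinder Z k zs
      = {ω | Θ ω = i ∧ ∀ j, 1 ≤ j → j ≤ k → Z j ω = zs j} := by
    ext ω
    simp [pathCylinder, Set.EqOn, and_imp]
  rw [hset]
  exact hlaw k hk i zs

theorem IsQSLaw.measureReal_pathCylinder [IsFiniteMeasure P] (hlaw : IsQSLaw P Θ Z α π₁)
    (hΘ : Measurable Θ) {k : ℕ} (hk : 1 ≤ k) (zs : ℕ → Fin 4) :
    P.real (pathCylinder Z k zs) = 1 / 4 * pathEvidence α π₁ k zs := by
  have hfibers : P.real (pathCylinder Z k zs)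
      = ∑ i, P.real (Θ ⁻¹' {i} ∩ pathCylinder Z k zs) := by
    rw [← measureReal_restrict_apply_univ, ← Set.preimage_univ (f := Θ), ← Finset.coe_univ,
      ← sum_measureReal_preimage_singleton _ fun i _ => hΘ (measurableSet_singleton i)]
    exact Finset.sum_congr rfl fun i _ =>
      measureReal_restrict_apply (hΘ (measurableSet_singleton i))
  rw [hfibers, Fin.sum_univ_two, hlaw.measureReal_preimage_inter_pathCylinder hk,
    hlaw.measureReal_preimage_inter_pathCylinder hk, pathEvidence]
  simp only [Fin.isValue, zero_ne_one, if_false, if_true]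
  ring

theorem IsQSLaw.qsPosterior_ae_eq [IsFiniteMeasure P] (hlaw : IsQSLaw P Θ Z α π₁)
    (hΘ : Measurable Θ) (hZ : ∀ k, Measurable (Z k)) {k : ℕ} (hk : 1 ≤ k) :
    qsPosterior P Θ Z hZ k =ᵐ[P] fun ω => pathPosterior α π₁ k (fun j => Z j ω) := by
  have hΘ1 : MeasurableSet (Θ ⁻¹' {1}) := hΘ (measurableSet_singleton 1)
  have hind : (fun ω => if Θ ω = 1 then (1 : ℝ) else 0) = (Θ ⁻¹' {1}).indicator 1 := by
    ext ω
    by_cases h : Θ ω = 1 <;> simp [h]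
  rw [qsPosterior, hind]
  refine condExp_qsFiltration_ae_eq hZ ((integrable_const 1).indicator hΘ1)
    (fun _ _ h => pathPosterior_congr h) fun zs hne => ?_
  rw [hlaw.measureReal_pathCylinder hΘ hk] at hne ⊢
  rw [setIntegral_indicator hΘ1, Set.inter_comm, Pi.one_def, setIntegral_const, smul_eq_mul,
    mul_one, hlaw.measureReal_preimage_inter_pathCylinder hk, if_pos rfl, pathPosterior]
  field_simp [right_ne_zero_of_mul hne]

theorem integrable_comp_pathPosterior [IsFiniteMeasure P] (hZ : ∀ k, Measurable (Z k)) {k : ℕ}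
    (hk : 1 ≤ k) (f : ℝ × Fin 4 → ℝ) :
    Integrable (fun ω => f (pathPosterior α π₁ k (fun j => Z j ω), Z k ω)) P :=
  integrable_comp_of_eqOn hZ (H := fun zs => f (pathPosterior α π₁ k zs, zs k))
    fun _ _ h => by rw [pathPosterior_congr h, h ⟨hk, le_rfl⟩]

theorem IsQSLaw.setIntegral_pathCylinder_pathPosterior_succ [IsFiniteMeasure P]
    (hlaw : IsQSLaw P Θ Z α π₁) (hΘ : Measurable Θ) (hZ : ∀ k, Measurable (Z k)) {k : ℕ} (hk : 1 ≤ k)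
    (f : ℝ × Fin 4 → ℝ) (zs : ℕ → Fin 4) (hne : P.real (pathCylinder Z k zs) ≠ 0) :
    ∫ ω in pathCylinder Z k zs, f (pathPosterior α π₁ (k + 1) (fun j => Z j ω), Z (k + 1) ω) ∂P
      = beliefTransition α f (pathPosterior α π₁ k zs) (zs k) * P.real (pathCylinder Z k zs) := by
  have hD : pathEvidence α π₁ k zs ≠ 0 := by
    rw [hlaw.measureReal_pathCylinder hΘ hk] at hne
    exact right_ne_zero_of_mul hne
  rw [setIntegral_eq_sum_setIntegral_preimage_inter (hZ (k + 1))
    (integrable_comp_pathPosterior hZ (Nat.le_succ_of_le hk) f).integrableOn,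
    beliefTransition, Finset.sum_mul]
  refine Finset.sum_congr rfl fun z' _ => ?_
  have hconst : ∀ ω ∈ pathCylinder Z (k + 1) (Function.update zs (k + 1) z'),
      f (pathPosterior α π₁ (k + 1) (fun j => Z j ω), Z (k + 1) ω)
        = f (pathPosterior α π₁ (k + 1) (Function.update zs (k + 1) z'), z') := by
    intro ω hω
    rw [pathPosterior_congr hω,
      show Z (k + 1) ω = z' from (hω ⟨by omega, le_rfl⟩).trans (Function.update_self _ _ _)]
  rw [Set.inter_comm, ← pathCylinder_succ,
    setIntegral_congr_fun (measurableSet_pathCylinder hZ _ _) hconst, setIntegral_const,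
    smul_eq_mul, hlaw.measureReal_pathCylinder hΘ (Nat.le_succ_of_le hk),
    hlaw.measureReal_pathCylinder hΘ hk, pathEvidence_update_succ hk hD,
    pathPosterior_update_succ hk hD]
  ring

theorem IsQSLaw.condExp_pathPosterior_succ_ae_eq [IsFiniteMeasure P] (hlaw : IsQSLaw P Θ Z α π₁)
    (hΘ : Measurable Θ) (hZ : ∀ k, Measurable (Z k)) {k : ℕ} (hk : 1 ≤ k)
    (f : ℝ × Fin 4 → ℝ) :
    P[fun ω => f (pathPosterior α π₁ (k + 1) (fun j => Z j ω), Z (k + 1) ω) | qsFiltration Z hZ k]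
      =ᵐ[P] fun ω => beliefTransition α f (pathPosterior α π₁ k (fun j => Z j ω)) (Z k ω) :=
  condExp_qsFiltration_ae_eq hZ (integrable_comp_pathPosterior hZ (Nat.le_succ_of_le hk) f)
    (H := fun zs => beliefTransition α f (pathPosterior α π₁ k zs) (zs k))
    (fun _ _ h => by rw [pathPosterior_congr h, h ⟨hk, le_rfl⟩])
    (hlaw.setIntegral_pathCylinder_pathPosterior_succ hΘ hZ hk f)

end QuickstopLaw

theorem quickstop_belief_state_markov_general
    {Ω : Type} [MeasurableSpace Ω] (P : Measure Ω) [IsProbabilityMeasure P]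
    (Θ : Ω → Fin 2) (Z : ℕ → Ω → Fin 4)
    (hΘ : Measurable Θ) (hZ : ∀ k, Measurable (Z k))
    (α : Fin 2 → Fin 4 → Fin 4 → ℝ)
    (π₁ : ℝ)
    (hlaw : IsQSLaw P Θ Z α π₁) :
    ∀ k : ℕ, 1 ≤ k → ∀ f : ℝ × Fin 4 → ℝ, Measurable f → (∃ C : ℝ, ∀ p, |f p| ≤ C) →
      P[fun ω => f (qsPosterior P Θ Z hZ (k + 1) ω, Z (k + 1) ω) | qsFiltration Z hZ k]
        =ᵐ[P] fun ω =>
          ∑ z' : Fin 4,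
            f (qsPosterior P Θ Z hZ k ω * α 1 z' (Z k ω)
                / (qsPosterior P Θ Z hZ k ω * α 1 z' (Z k ω)
                    + (1 - qsPosterior P Θ Z hZ k ω) * α 0 z' (Z k ω)), z')
              * (qsPosterior P Θ Z hZ k ω * α 1 z' (Z k ω)
                  + (1 - qsPosterior P Θ Z hZ k ω) * α 0 z' (Z k ω)) := by
  intro k hk f _ _
  have hpost := hlaw.qsPosterior_ae_eq hΘ hZ hk
  have hpostSucc := hlaw.qsPosterior_ae_eq hΘ hZ (k := k + 1) (by omega)
  calc P[fun ω => f (qsPosterior P Θ Z hZ (k + 1) ω, Z (k + 1) ω) | qsFiltration Z hZ k]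
      =ᵐ[P] P[fun ω => f (pathPosterior α π₁ (k + 1) (fun j => Z j ω), Z (k + 1) ω)
          | qsFiltration Z hZ k] :=
        condExp_congr_ae (hpostSucc.mono fun ω h => congrArg (fun p => f (p, Z (k + 1) ω)) h)
    _ =ᵐ[P] fun ω => beliefTransition α f (pathPosterior α π₁ k (fun j => Z j ω)) (Z k ω) :=
        hlaw.condExp_pathPosterior_succ_ae_eq hΘ hZ hk f
    _ =ᵐ[P] _ := hpost.mono fun ω h => (congrArg (fun p => beliefTransition α f p (Z k ω)) h).symm

/-- The belief-state pair `(Π_k, Z_k)` is a Markov chain with an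
explicit time-homogeneous transition law: for every `k ≥ 1` and every bounded
measurable `f : ℝ × Fin 4 → ℝ`, `P`-almost surely
`E[f(Π_{k+1}, Z_{k+1}) | F_k]
  = ∑_{z'} f(Π_k α₁(z'|Z_k) / (Π_k α₁(z'|Z_k) + (1-Π_k) α₀(z'|Z_k)), z')
      ⬝ (Π_k α₁(z'|Z_k) + (1-Π_k) α₀(z'|Z_k))`;
in particular this conditional expectation is a fixed function of `(Π_k, Z_k)`
not depending on `k`. -/
theorem quickstop_belief_state_markov
    {Ω : Type} [MeasurableSpace Ω] (P : Measure Ω) [IsProbabilityMeasure P]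
    (Θ : Ω → Fin 2) (Z : ℕ → Ω → Fin 4)
    (hΘ : Measurable Θ) (hZ : ∀ k, Measurable (Z k))
    (α : Fin 2 → Fin 4 → Fin 4 → ℝ)
    (hαpos : ∀ i z z', 0 < α i z' z)
    (hαsum : ∀ i z, ∑ z', α i z' z = 1)
    (π₁ : ℝ) (hπ : π₁ ∈ Set.Ioo (0 : ℝ) 1)
    (hlaw : IsQSLaw P Θ Z α π₁) :
    ∀ k : ℕ, 1 ≤ k → ∀ f : ℝ × Fin 4 → ℝ, Measurable f → (∃ C : ℝ, ∀ p, |f p| ≤ C) →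
      P[fun ω => f (qsPosterior P Θ Z hZ (k + 1) ω, Z (k + 1) ω) | qsFiltration Z hZ k]
        =ᵐ[P] fun ω =>
          ∑ z' : Fin 4,
            f (qsPosterior P Θ Z hZ k ω * α 1 z' (Z k ω)
                / (qsPosterior P Θ Z hZ k ω * α 1 z' (Z k ω)
                    + (1 - qsPosterior P Θ Z hZ k ω) * α 0 z' (Z k ω)), z')
              * (qsPosterior P Θ Z hZ k ω * α 1 z' (Z k ω)
                  + (1 - qsPosterior P Θ Z hZ k ω) * α 0 z' (Z k ω)) :=
  quickstop_belief_state_markov_general P Θ Z hΘ hZ α π₁ hlaw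
end

section
/- Decomposition of the optimal cost over the uniform initial observation: under the original model P (prior π_1, Z_1 uniform on Fin 4), the minimum expected total cost s_1* = inf over a.s. finite stopping times T ≥ 1 with E[T] < ∞ (with respect to (F_k)) of E[g(Π_T) + c·T·Π_T] satisfies s_1* = (1/4)·Σ_{z=0}^{3} s_1(π_1, z), where s_1(π, z) is the value function of the chain started with belief π and initial observation z. -/
/-! Under `P` the first observation `Z 1` is uniform, and `P` conditioned on `{Z 1 = z}` has the
same cylinder probabilities as `P_{π₁,z}`, hence agrees with it on `σ(Θ, Z 1, Z 2, …)`. Since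
`{Z 1 = z} ∈ F_k` for `k ≥ 1`, conditioning on `F_k` commutes with this restriction, so the
posteriors computed under `P` and under `P_{π₁,z}` agree `P_{π₁,z}`-a.s. Consequently the expected
cost of an admissible `T` under `P` is the average over `z` of its expected costs under the
`P_{π₁,z}`; conversely admissible times `T_z`, one for each `z`, paste into the admissible time
`ω ↦ T_{Z 1 ω} ω`. So the set of achievable costs under `P` is the average of the four sets of
achievable costs under the `P_{π₁,z}`, and the infimum of such an average of nonempty sets that are
bounded below is the average of the infima. -/

open MeasureTheory ProbabilityTheory

open scoped ENNReal Pointwise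
open MeasurableSpace

theorem csInf_image_sum_pi {ι : Type*} [Fintype ι] {B : ι → Set ℝ}
    (hne : ∀ i, (B i).Nonempty) (hbdd : ∀ i, BddBelow (B i)) :
    sInf ((fun b : ι → ℝ => ∑ i, b i) '' Set.univ.pi B) = ∑ i, sInf (B i) := by
  have hpi : (Set.univ.pi B).Nonempty := Set.univ_pi_nonempty_iff.2 hne
  apply le_antisymm
  · refine le_of_forall_pos_le_add fun ε hε => ?_
    have hδ : 0 < ε / (Fintype.card ι + 1) := by positivity
    choose b hbB hb using fun i => exists_lt_of_csInf_lt (hne i) (lt_add_of_pos_right _ hδ)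
    have hlow : BddBelow ((fun b : ι → ℝ => ∑ i, b i) '' Set.univ.pi B) :=
      ⟨∑ i, sInf (B i), by
        rintro _ ⟨b', hb', rfl⟩
        exact Finset.sum_le_sum fun i _ => csInf_le (hbdd i) (hb' i trivial)⟩
    calc sInf ((fun b : ι → ℝ => ∑ i, b i) '' Set.univ.pi B)
        ≤ ∑ i, b i := csInf_le hlow ⟨b, fun i _ => hbB i, rfl⟩
      _ ≤ ∑ i, (sInf (B i) + ε / (Fintype.card ι + 1)) :=
        Finset.sum_le_sum fun i _ => (hb i).le
      _ ≤ ∑ i, sInf (B i) + ε := by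
        rw [Finset.sum_add_distrib, Finset.sum_const, Finset.card_univ, nsmul_eq_mul]
        have : (Fintype.card ι : ℝ) * (ε / (Fintype.card ι + 1)) ≤ ε := by
          rw [mul_div_assoc', div_le_iff₀ (by positivity)]
          nlinarith
        linarith
  · refine le_csInf (hpi.image _) ?_
    rintro _ ⟨b, hb, rfl⟩
    exact Finset.sum_le_sum fun i _ => csInf_le (hbdd i) (hb i trivial)

theorem csInf_image_mul_sum_pi {ι : Type*} [Fintype ι] {B : ι → Set ℝ}
    (hne : ∀ i, (B i).Nonempty) (hbdd : ∀ i, BddBelow (B i)) {a : ℝ} (ha : 0 ≤ a) :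
    sInf ((fun b : ι → ℝ => a * ∑ i, b i) '' Set.univ.pi B) = a * ∑ i, sInf (B i) := by
  have : (fun b : ι → ℝ => a * ∑ i, b i) '' Set.univ.pi B
      = a • ((fun b : ι → ℝ => ∑ i, b i) '' Set.univ.pi B) := by
    rw [← Set.image_smul, Set.image_image]; rfl
  rw [this, Real.sInf_smul_of_nonneg ha, csInf_image_sum_pi hne hbdd, smul_eq_mul]

theorem isStoppingTime_of_measurable_selector {Ω : Type*} [MeasurableSpace Ω] {S : Type*}
    [MeasurableSpace S] [MeasurableSingletonClass S] [Countable S]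
    {f : Filtration ℕ ‹MeasurableSpace Ω›} {X : Ω → S} (hX : Measurable[f 1] X) {T : S → Ω → ℕ}
    (hT : ∀ s, IsStoppingTime f (fun ω => (T s ω : WithTop ℕ))) (hT1 : ∀ s ω, 1 ≤ T s ω) :
    IsStoppingTime f (fun ω => (T (X ω) ω : WithTop ℕ)) := by
  intro n
  suffices MeasurableSet[f n] {ω | T (X ω) ω ≤ n} by simpa using this
  rcases Nat.eq_zero_or_pos n with rfl | hn
  · convert @MeasurableSet.empty Ω (f 0)
    exact Set.eq_empty_of_forall_notMem fun ω h => absurd (hT1 _ ω) (by simpa using h)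
  · have hset : {ω | T (X ω) ω ≤ n} = ⋃ s, X ⁻¹' {s} ∩ {ω | T s ω ≤ n} := by
      ext ω; simp
    rw [hset]
    exact .iUnion fun s => (f.mono hn _ (hX (measurableSet_singleton s))).inter
      (by simpa using hT s n)

section Observables

variable {Ω : Type} {Θ : Ω → Fin 2} {Z : ℕ → Ω → Fin 4}

/-- `σ(Θ, Z 1, Z 2, …)`: the laws in the problem are only pinned down on this σ-algebra, through
their cylinder probabilities; the ambient one on `Ω` may be larger. -/
abbrev qsSigma (Θ : Ω → Fin 2) (Z : ℕ → Ω → Fin 4) : MeasurableSpace Ω :=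
  MeasurableSpace.comap Θ inferInstance ⊔
    ⨆ j ∈ Set.Ici 1, MeasurableSpace.comap (Z j) inferInstance

theorem measurable_qsSigma_theta : Measurable[qsSigma Θ Z] Θ :=
  Measurable.of_comap_le (le_sup_left (a := MeasurableSpace.comap Θ inferInstance))

theorem measurable_qsSigma_Z {j : ℕ} (hj : 1 ≤ j) : Measurable[qsSigma Θ Z] (Z j) :=
  Measurable.of_comap_le <| le_sup_of_le_right <|
    le_biSup (fun j => MeasurableSpace.comap (Z j) inferInstance) (Set.mem_Ici.2 hj)

theorem stronglyMeasurable_qsSigma_ite_theta :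
    StronglyMeasurable[qsSigma Θ Z] (fun ω => if Θ ω = 1 then (1 : ℝ) else 0) :=
  (Measurable.ite (measurable_qsSigma_theta (measurableSet_singleton 1)) measurable_const
    measurable_const).stronglyMeasurable

def qsCylinder (Θ : Ω → Fin 2) (Z : ℕ → Ω → Fin 4) (i : Fin 2) (k : ℕ) (zs : ℕ → Fin 4) :
    Set Ω :=
  {ω | Θ ω = i ∧ ∀ j, 1 ≤ j → j ≤ k → Z j ω = zs j}

def qsCylinders (Θ : Ω → Fin 2) (Z : ℕ → Ω → Fin 4) : Set (Set Ω) :=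
  {s | ∃ i k zs, 1 ≤ k ∧ s = qsCylinder Θ Z i k zs}

theorem isPiSystem_qsCylinders : IsPiSystem (qsCylinders Θ Z) := by
  rintro _ ⟨i, k, zs, hk, rfl⟩ _ ⟨i', k', zs', -, rfl⟩ ⟨ω, ⟨hΘ, hZ⟩, ⟨hΘ', hZ'⟩⟩
  have hagree : ∀ j, 1 ≤ j → j ≤ k → j ≤ k' → zs j = zs' j := fun j h1 h2 h3 =>
    (hZ j h1 h2).symm.trans (hZ' j h1 h3)
  refine ⟨i, max k k', fun j => if j ≤ k then zs j else zs' j, hk.trans (le_max_left _ _), ?_⟩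
  ext ω'
  simp only [qsCylinder, Set.mem_inter_iff, Set.mem_ofPred_eq]
  constructor
  · rintro ⟨⟨h, hk⟩, -, hk'⟩
    refine ⟨h, fun j h1 h2 => ?_⟩
    split_ifs with hjk
    · exact hk j h1 hjk
    · exact hk' j h1 (by omega)
  · rintro ⟨h, hkk'⟩
    refine ⟨⟨h, fun j h1 h2 => by simpa [h2] using hkk' j h1 (le_max_of_le_left h2)⟩,
      h.trans (hΘ.symm.trans hΘ'), fun j h1 h2 => ?_⟩
    have := hkk' j h1 (le_max_of_le_right h2)
    split_ifs at this with hjk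
    · exact this.trans (hagree j h1 hjk h2)
    · exact this

theorem measurableSet_qsCylinder (i : Fin 2) (k : ℕ) (zs : ℕ → Fin 4) :
    MeasurableSet[qsSigma Θ Z] (qsCylinder Θ Z i k zs) := by
  have : qsCylinder Θ Z i k zs = Θ ⁻¹' {i} ∩ ⋂ j ∈ Set.Icc 1 k, Z j ⁻¹' {zs j} := by
    ext ω; simp [qsCylinder]
  rw [this]
  exact (measurable_qsSigma_theta (measurableSet_singleton i)).inter <|
    .biInter (Set.to_countable _) fun j hj =>
      measurable_qsSigma_Z hj.1 (measurableSet_singleton _)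

/-- The first `j` observations together with `Θ`: its fibres are exactly the cylinders of
length `j`, and `Θ` and `Z j` factor through it. -/
theorem measurable_generateFrom_qsCylinders {j : ℕ} (hj : 1 ≤ j) :
    Measurable[generateFrom (qsCylinders Θ Z)]
      (fun ω => (Θ ω, fun l : Set.Icc 1 j => Z l ω)) := by
  refine @measurable_to_countable' _ _ _ _ (generateFrom _) _ fun x =>
    measurableSet_generateFrom
      ⟨x.1, j, fun n => if h : n ∈ Set.Icc 1 j then x.2 ⟨n, h⟩ else 0, hj, ?_⟩
  ext ω
  simp only [qsCylinder, Set.mem_preimage, Set.mem_singleton_iff, Prod.ext_iff, funext_iff,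
    Subtype.forall, Set.mem_Icc, Set.mem_ofPred_eq]
  refine and_congr_right fun _ => forall_congr' fun n => ⟨fun h h1 h2 => ?_, fun h hn => ?_⟩
  · rw [dif_pos ⟨h1, h2⟩]; exact h ⟨h1, h2⟩
  · simpa [dif_pos hn] using h hn.1 hn.2

theorem qsSigma_eq_generateFrom : qsSigma Θ Z = generateFrom (qsCylinders Θ Z) := by
  refine le_antisymm (sup_le ?_ (iSup₂_le fun j hj => ?_)) ?_
  · exact (measurable_generateFrom_qsCylinders le_rfl).fst.comap_le
  · exact ((measurable_pi_apply (⟨j, hj, le_rfl⟩ : Set.Icc 1 j)).comp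
      (measurable_generateFrom_qsCylinders hj).snd).comap_le
  · exact generateFrom_le fun _ ⟨i, k, zs, _, hs⟩ => hs ▸ measurableSet_qsCylinder i k zs

variable [MeasurableSpace Ω]

theorem qsSigma_le (hΘ : Measurable Θ) (hZ : ∀ k, Measurable (Z k)) :
    qsSigma Θ Z ≤ ‹MeasurableSpace Ω› :=
  sup_le hΘ.comap_le (iSup₂_le fun j _ => (hZ j).comap_le)

theorem qsFiltration_le_qsSigma (hZ : ∀ k, Measurable (Z k)) (k : ℕ) :
    (qsFiltration Z hZ k : MeasurableSpace Ω) ≤ qsSigma Θ Z :=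
  le_sup_of_le_right (biSup_mono fun _ hj => hj.1)

theorem measurable_qsFiltration_Z_one (hZ : ∀ k, Measurable (Z k)) {k : ℕ} (hk : 1 ≤ k) :
    Measurable[qsFiltration Z hZ k] (Z 1) :=
  Measurable.of_comap_le <|
    le_biSup (fun j => MeasurableSpace.comap (Z j) inferInstance) (Set.mem_Icc.2 ⟨le_rfl, hk⟩)

theorem measurable_qsSigma_of_isStoppingTime (hZ : ∀ k, Measurable (Z k)) {T : Ω → ℕ}
    (hT : IsStoppingTime (qsFiltration Z hZ) (fun ω => (T ω : WithTop ℕ))) :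
    Measurable[qsSigma Θ Z] T :=
  @measurable_to_countable' ℕ Ω _ _ (qsSigma Θ Z) T fun n =>
    qsFiltration_le_qsSigma hZ n _ (by simpa [Set.preimage] using hT.measurableSet_eq n)

end Observables

section Laws

variable {Ω : Type} [MeasurableSpace Ω] {Θ : Ω → Fin 2} {Z : ℕ → Ω → Fin 4}
  (hle : qsSigma Θ Z ≤ ‹MeasurableSpace Ω›)
  {α : Fin 2 → Fin 4 → Fin 4 → ℝ} {π : ℝ} {P μ : Measure Ω}

include hle

theorem trim_qsSigma_eq_of_qsCylinders [IsFiniteMeasure μ] [IsFiniteMeasure P]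
    (hcyl : ∀ s ∈ qsCylinders Θ Z, μ s = P s) (huniv : μ Set.univ = P Set.univ) :
    μ.trim hle = P.trim hle :=
  ext_of_generate_finite _ qsSigma_eq_generateFrom isPiSystem_qsCylinders
    (fun s hs => by
      obtain ⟨i, k, zs, hk, rfl⟩ := hs
      rw [trim_measurableSet_eq hle (measurableSet_qsCylinder i k zs),
        trim_measurableSet_eq hle (measurableSet_qsCylinder i k zs),
        hcyl _ ⟨i, k, zs, hk, rfl⟩])
    (by rw [trim_measurableSet_eq hle .univ, trim_measurableSet_eq hle .univ, huniv])

theorem measure_Z_one_eq_of_isQSLaw [IsFiniteMeasure P] (hlaw : IsQSLaw P Θ Z α π)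
    (z : Fin 4) : P {ω | Z 1 ω = z} = 4⁻¹ := by
  have hcyl : {ω | Z 1 ω = z} = ⋃ i : Fin 2, qsCylinder Θ Z i 1 fun _ => z := by
    ext ω
    simp only [qsCylinder, Set.mem_iUnion, Set.mem_ofPred_eq, exists_eq_left']
    exact ⟨fun h j h1 h2 => le_antisymm h2 h1 ▸ h, fun h => h 1 le_rfl le_rfl⟩
  have hdisj :
      Pairwise (Function.onFun Disjoint fun i : Fin 2 => qsCylinder Θ Z i 1 fun _ => z) :=
    fun i i' hii' => Set.disjoint_left.2 fun ω h h' => hii' (h.1.symm.trans h'.1)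
  rw [hcyl, measure_iUnion hdisj fun i => hle _ (measurableSet_qsCylinder i 1 _), tsum_fintype,
    Fin.sum_univ_two]
  refine (ENNReal.toReal_eq_toReal_iff' (by finiteness) (by norm_num)).1 ?_
  rw [ENNReal.toReal_add (measure_ne_top _ _) (measure_ne_top _ _), qsCylinder, qsCylinder,
    hlaw 1 le_rfl 0, hlaw 1 le_rfl 1]
  norm_num
  ring

theorem trim_eq_of_isQSLawFrom [IsProbabilityMeasure P] [IsProbabilityMeasure μ] {z : Fin 4}
    (hlaw : IsQSLaw P Θ Z α π) (hμ : IsQSLawFrom μ Θ Z α π z) :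
    μ.trim hle = ((4 : ℝ≥0∞) • P.restrict {ω | Z 1 ω = z}).trim hle := by
  have : IsFiniteMeasure ((4 : ℝ≥0∞) • P.restrict {ω | Z 1 ω = z}) := by
    constructor; simp [ENNReal.mul_lt_top]
  refine trim_qsSigma_eq_of_qsCylinders hle ?_ ?_
  · rintro _ ⟨i, k, zs, hk, rfl⟩
    have hmeas := hle _ (measurableSet_qsCylinder (Z := Z) i k zs)
    rw [Measure.smul_apply, smul_eq_mul, Measure.restrict_apply hmeas]
    by_cases hz : zs 1 = z
    · rw [Set.inter_eq_left.2 fun ω hω => (hω.2 1 le_rfl hk).trans hz]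
      refine (ENNReal.toReal_eq_toReal_iff' (measure_ne_top _ _) (by finiteness)).1 ?_
      rw [ENNReal.toReal_mul, qsCylinder, hμ k hk i zs, hlaw k hk i zs, if_pos hz]
      norm_num
      split_ifs <;> ring
    · have hempty : qsCylinder Θ Z i k zs ∩ {ω | Z 1 ω = z} = ∅ :=
        Set.eq_empty_of_forall_notMem fun ω hω => hz ((hω.1.2 1 le_rfl hk).symm.trans hω.2)
      rw [hempty, measure_empty, mul_zero]
      have := hμ k hk i zs
      rw [if_neg hz, ENNReal.toReal_eq_zero_iff] at this
      exact this.resolve_right (measure_ne_top _ _)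
  · rw [Measure.smul_apply, Measure.restrict_apply_univ, measure_univ,
      measure_Z_one_eq_of_isQSLaw hle hlaw, smul_eq_mul,
      ENNReal.mul_inv_cancel (by norm_num) (by norm_num)]

variable [IsProbabilityMeasure P] [IsProbabilityMeasure μ] {z : Fin 4}
  (hlaw : IsQSLaw P Θ Z α π) (hμ : IsQSLawFrom μ Θ Z α π z)

include hlaw hμ

theorem ae_Z_one_eq_of_isQSLawFrom : ∀ᵐ ω ∂μ, Z 1 ω = z := by
  have hmeas : MeasurableSet[qsSigma Θ Z] {ω | Z 1 ω = z}ᶜ :=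
    (measurable_qsSigma_Z le_rfl (measurableSet_singleton z)).compl
  rw [ae_iff]
  change μ {ω | Z 1 ω = z}ᶜ = 0
  rw [← trim_measurableSet_eq hle hmeas, trim_eq_of_isQSLawFrom hle hlaw hμ,
    trim_measurableSet_eq hle hmeas, Measure.smul_apply,
    Measure.restrict_apply (hle _ hmeas), Set.compl_inter_self, measure_empty, smul_zero]

theorem integral_eq_of_isQSLawFrom {f : Ω → ℝ} (hf : StronglyMeasurable[qsSigma Θ Z] f) :
    ∫ ω, f ω ∂μ = 4 * ∫ ω in {ω | Z 1 ω = z}, f ω ∂P := by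
  rw [integral_trim hle hf, trim_eq_of_isQSLawFrom hle hlaw hμ, ← integral_trim hle hf,
    integral_smul_measure, ENNReal.toReal_ofNat, smul_eq_mul]

theorem integrable_iff_of_isQSLawFrom {f : Ω → ℝ} (hf : StronglyMeasurable[qsSigma Θ Z] f) :
    Integrable f μ ↔ IntegrableOn f {ω | Z 1 ω = z} P := by
  have htrim := trim_eq_of_isQSLawFrom hle hlaw hμ
  rw [IntegrableOn, ← integrable_smul_measure (μ := P.restrict {ω | Z 1 ω = z})
    (c := (4 : ℝ≥0∞)) (by norm_num) (by norm_num)]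
  refine ⟨fun h => integrable_of_integrable_trim hle ?_,
    fun h => integrable_of_integrable_trim hle ?_⟩
  · rw [← htrim]; exact h.trim hle hf
  · rw [htrim]; exact h.trim hle hf

end Laws

section Posterior

variable {Ω : Type} [MeasurableSpace Ω] {Θ : Ω → Fin 2} {Z : ℕ → Ω → Fin 4}
  (hle : qsSigma Θ Z ≤ ‹MeasurableSpace Ω›)

theorem stronglyMeasurable_qsPosterior (hZ : ∀ k, Measurable (Z k)) (μ : Measure Ω) (k : ℕ) :
    StronglyMeasurable[qsSigma Θ Z] (qsPosterior μ Θ Z hZ k) :=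
  stronglyMeasurable_condExp.mono (qsFiltration_le_qsSigma hZ k)

include hle

theorem integrable_ite_theta (μ : Measure Ω) [IsFiniteMeasure μ] :
    Integrable (fun ω => if Θ ω = 1 then (1 : ℝ) else 0) μ :=
  (integrable_const (1 : ℝ)).mono'
    ((stronglyMeasurable_qsSigma_ite_theta (Z := Z)).mono hle).aestronglyMeasurable
    (ae_of_all _ fun ω => by split_ifs <;> norm_num)

theorem ae_qsPosterior_mem_Icc (hZ : ∀ k, Measurable (Z k)) (μ : Measure Ω)
    [IsProbabilityMeasure μ] (k : ℕ) :
    ∀ᵐ ω ∂μ, qsPosterior μ Θ Z hZ k ω ∈ Set.Icc (0 : ℝ) 1 := by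
  have hnonneg : 0 ≤ᵐ[μ] qsPosterior μ Θ Z hZ k :=
    condExp_nonneg (ae_of_all _ fun ω => by dsimp only; split_ifs <;> norm_num)
  have hle_one : qsPosterior μ Θ Z hZ k ≤ᵐ[μ] fun _ => (1 : ℝ) := by
    have := condExp_mono (m := qsFiltration Z hZ k) (integrable_ite_theta hle μ)
      (integrable_const (1 : ℝ)) (ae_of_all _ fun ω => by dsimp only; split_ifs <;> norm_num)
    rwa [condExp_const ((qsFiltration Z hZ).le k)] at this
  filter_upwards [hnonneg, hle_one] with ω h0 h1
  exact ⟨h0, h1⟩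

theorem qsPosterior_ae_eq_of_isQSLawFrom (hZ : ∀ k, Measurable (Z k))
    {α : Fin 2 → Fin 4 → Fin 4 → ℝ} {π : ℝ} {z : Fin 4} {P μ : Measure Ω}
    [IsProbabilityMeasure P] [IsProbabilityMeasure μ]
    (hlaw : IsQSLaw P Θ Z α π) (hμ : IsQSLawFrom μ Θ Z α π z) {k : ℕ} (hk : 1 ≤ k) :
    qsPosterior P Θ Z hZ k =ᵐ[μ] qsPosterior μ Θ Z hZ k := by
  have hFk := (qsFiltration Z hZ).le k
  have hz : MeasurableSet[qsFiltration Z hZ k] {ω | Z 1 ω = z} :=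
    measurable_qsFiltration_Z_one hZ hk (measurableSet_singleton z)
  have hpost := stronglyMeasurable_qsPosterior (Θ := Θ) hZ P k
  have hrestrict : ∀ s, MeasurableSet[qsFiltration Z hZ k] s → ∀ h : Ω → ℝ,
      StronglyMeasurable[qsSigma Θ Z] h →
        ∫ ω in s, h ω ∂μ = 4 * ∫ ω in {ω | Z 1 ω = z} ∩ s, h ω ∂P := fun s hs h hh => by
    rw [← integral_indicator (hFk s hs), integral_eq_of_isQSLawFrom hle hlaw hμ
      (hh.indicator (qsFiltration_le_qsSigma hZ k s hs)), setIntegral_indicator (hFk s hs)]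
  refine ae_eq_condExp_of_forall_setIntegral_eq hFk (integrable_ite_theta hle μ)
    (fun s _ _ => ((integrable_iff_of_isQSLawFrom hle hlaw hμ hpost).2
      integrable_condExp.integrableOn).integrableOn) (fun s hs _ => ?_)
    stronglyMeasurable_condExp.aestronglyMeasurable
  rw [hrestrict s hs _ hpost, hrestrict s hs _ stronglyMeasurable_qsSigma_ite_theta]
  exact congrArg (4 * ·) (setIntegral_condExp hFk (integrable_ite_theta hle P) (hz.inter hs))

end Posterior

section Cost

variable {Ω : Type} (cI cII c : ℝ)

def qsCost (post : ℕ → Ω → ℝ) (T : Ω → ℕ) (ω : Ω) : ℝ :=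
  qsG cI cII (post (T ω) ω) + c * (T ω : ℝ) * post (T ω) ω

theorem stronglyMeasurable_qsCost {m : MeasurableSpace Ω} {post : ℕ → Ω → ℝ}
    (hpost : ∀ n, StronglyMeasurable[m] (post n)) {T : Ω → ℕ} (hT : Measurable[m] T) :
    StronglyMeasurable[m] (qsCost cI cII c post T) := by
  have hjoint : Measurable[m.prod inferInstance]
      (fun p : Ω × ℕ => qsG cI cII (post p.2 p.1) + c * (p.2 : ℝ) * post p.2 p.1) :=
    measurable_from_prod_countable_left fun n => by
      have hn := (hpost n).measurable
      exact ((hn.const_mul cII).min ((measurable_const.sub hn).const_mul cI)).add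
        (hn.const_mul (c * n))
  exact (hjoint.comp (measurable_id.prodMk hT)).stronglyMeasurable

variable {cI cII c}

theorem qsCost_mem_Icc (hcI : 0 ≤ cI) (hcII : 0 ≤ cII) (hc : 0 ≤ c) {post : ℕ → Ω → ℝ}
    {T : Ω → ℕ} {ω : Ω} (hpost : post (T ω) ω ∈ Set.Icc (0 : ℝ) 1) :
    qsCost cI cII c post T ω ∈ Set.Icc 0 (cII + c * T ω) := by
  obtain ⟨h0, h1⟩ := hpost
  have hT : (0 : ℝ) ≤ T ω := Nat.cast_nonneg _
  have hg0 : 0 ≤ qsG cI cII (post (T ω) ω) :=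
    le_min (mul_nonneg hcII h0) (mul_nonneg hcI (by linarith))
  have hg1 : qsG cI cII (post (T ω) ω) ≤ cII :=
    (min_le_left _ _).trans (mul_le_of_le_one_right hcII h1)
  have hcT : 0 ≤ c * T ω := mul_nonneg hc hT
  exact ⟨add_nonneg hg0 (mul_nonneg hcT h0),
    add_le_add hg1 (mul_le_of_le_one_right hcT h1)⟩

variable [MeasurableSpace Ω] (cI cII c)

def qsCostSet (μ : Measure Ω) (Θ : Ω → Fin 2) (Z : ℕ → Ω → Fin 4)
    (hZ : ∀ k, Measurable (Z k)) : Set ℝ :=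
  {x | ∃ T : Ω → ℕ, IsStoppingTime (qsFiltration Z hZ) (fun ω => (T ω : WithTop ℕ)) ∧
    (∀ ω, 1 ≤ T ω) ∧ Integrable (fun ω => (T ω : ℝ)) μ ∧
    x = ∫ ω, qsCost cI cII c (qsPosterior μ Θ Z hZ) T ω ∂μ}

theorem qsCostSet_nonempty (μ : Measure Ω) [IsFiniteMeasure μ] (Θ : Ω → Fin 2)
    (Z : ℕ → Ω → Fin 4) (hZ : ∀ k, Measurable (Z k)) :
    (qsCostSet cI cII c μ Θ Z hZ).Nonempty :=
  ⟨_, fun _ => 1, isStoppingTime_const _ 1, fun _ => le_rfl, by simp, rfl⟩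

variable {cI cII c} {Θ : Ω → Fin 2} {Z : ℕ → Ω → Fin 4}
  (hle : qsSigma Θ Z ≤ ‹MeasurableSpace Ω›) (hZ : ∀ k, Measurable (Z k))
  (hcI : 0 ≤ cI) (hcII : 0 ≤ cII) (hc : 0 ≤ c)
  (μ : Measure Ω) [IsProbabilityMeasure μ]

include hle hcI hcII hc

theorem ae_qsCost_qsPosterior_mem_Icc (T : Ω → ℕ) :
    ∀ᵐ ω ∂μ, qsCost cI cII c (qsPosterior μ Θ Z hZ) T ω ∈ Set.Icc 0 (cII + c * T ω) := by
  filter_upwards [ae_all_iff.2 (ae_qsPosterior_mem_Icc hle hZ μ)] with ω hω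
  exact qsCost_mem_Icc hcI hcII hc (hω (T ω))

theorem integrable_qsCost_qsPosterior {T : Ω → ℕ} (hT : Measurable[qsSigma Θ Z] T)
    (hTint : Integrable (fun ω => (T ω : ℝ)) μ) :
    Integrable (qsCost cI cII c (qsPosterior μ Θ Z hZ) T) μ :=
  ((integrable_const cII).add (hTint.const_mul c)).mono'
    ((stronglyMeasurable_qsCost cI cII c (stronglyMeasurable_qsPosterior hZ μ) hT).mono
      hle).aestronglyMeasurable
    (by
      filter_upwards [ae_qsCost_qsPosterior_mem_Icc hle hZ hcI hcII hc μ T] with ω hω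
      rw [Real.norm_of_nonneg hω.1]
      exact hω.2)

theorem bddBelow_qsCostSet : BddBelow (qsCostSet cI cII c μ Θ Z hZ) := by
  refine ⟨0, ?_⟩
  rintro _ ⟨T, -, -, -, rfl⟩
  exact integral_nonneg_of_ae ((ae_qsCost_qsPosterior_mem_Icc hle hZ hcI hcII hc μ T).mono
    fun ω hω => hω.1)

end Cost

section Mixture

variable {Ω : Type} [MeasurableSpace Ω] {Θ : Ω → Fin 2} {Z : ℕ → Ω → Fin 4}
  (hle : qsSigma Θ Z ≤ ‹MeasurableSpace Ω›)
  {α : Fin 2 → Fin 4 → Fin 4 → ℝ} {π : ℝ} {P : Measure Ω} [IsProbabilityMeasure P]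
  {μ : Fin 4 → Measure Ω} [∀ z, IsProbabilityMeasure (μ z)]
  (hlaw : IsQSLaw P Θ Z α π) (hμ : ∀ z, IsQSLawFrom (μ z) Θ Z α π z)

include hle hlaw hμ

theorem integrable_iff_forall_of_isQSLawFrom {f : Ω → ℝ}
    (hf : StronglyMeasurable[qsSigma Θ Z] f) : Integrable f P ↔ ∀ z, Integrable f (μ z) := by
  have hcover : ⋃ z, {ω | Z 1 ω = z} = Set.univ :=
    Set.iUnion_eq_univ_iff.2 fun ω => ⟨Z 1 ω, rfl⟩
  rw [← integrableOn_univ, ← hcover, integrableOn_finite_iUnion]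
  exact forall_congr' fun z => (integrable_iff_of_isQSLawFrom hle hlaw (hμ z) hf).symm

theorem integral_eq_mean_of_isQSLawFrom {f : Ω → ℝ} (hf : StronglyMeasurable[qsSigma Θ Z] f)
    (hint : Integrable f P) : ∫ ω, f ω ∂P = 1 / 4 * ∑ z, ∫ ω, f ω ∂(μ z) := by
  have hcover : ⋃ z, {ω | Z 1 ω = z} = Set.univ :=
    Set.iUnion_eq_univ_iff.2 fun ω => ⟨Z 1 ω, rfl⟩
  have hdisj : Pairwise (Function.onFun Disjoint fun z : Fin 4 => {ω | Z 1 ω = z}) :=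
    fun _ _ h => (Set.disjoint_singleton.2 h).preimage _
  rw [← setIntegral_univ, ← hcover, integral_iUnion_fintype (s := fun z => {ω | Z 1 ω = z})
      (fun z => hle _ (measurable_qsSigma_Z le_rfl (measurableSet_singleton z))) hdisj
      fun _ => hint.integrableOn, Finset.mul_sum]
  refine Finset.sum_congr rfl fun z _ => ?_
  rw [integral_eq_of_isQSLawFrom hle hlaw (hμ z) hf]
  ring

end Mixture

section Decomposition

variable {Ω : Type} [MeasurableSpace Ω] {Θ : Ω → Fin 2} {Z : ℕ → Ω → Fin 4}
  (hle : qsSigma Θ Z ≤ ‹MeasurableSpace Ω›)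
  (hZ : ∀ k, Measurable (Z k)) {α : Fin 2 → Fin 4 → Fin 4 → ℝ} {π : ℝ}
  {P : Measure Ω} [IsProbabilityMeasure P] {μ : Fin 4 → Measure Ω}
  [∀ z, IsProbabilityMeasure (μ z)] (hlaw : IsQSLaw P Θ Z α π)
  (hμ : ∀ z, IsQSLawFrom (μ z) Θ Z α π z) {cI cII c : ℝ} (hcI : 0 ≤ cI) (hcII : 0 ≤ cII)
  (hc : 0 ≤ c)

include hle hlaw hμ hcI hcII hc

theorem integral_qsCost_eq_mean {T : Ω → ℕ}
    (hT : IsStoppingTime (qsFiltration Z hZ) (fun ω => (T ω : WithTop ℕ)))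
    (hT1 : ∀ ω, 1 ≤ T ω) (hTint : Integrable (fun ω => (T ω : ℝ)) P) :
    ∫ ω, qsCost cI cII c (qsPosterior P Θ Z hZ) T ω ∂P
      = 1 / 4 * ∑ z, ∫ ω, qsCost cI cII c (qsPosterior (μ z) Θ Z hZ) T ω ∂(μ z) := by
  have hTm := measurable_qsSigma_of_isStoppingTime (Θ := Θ) hZ hT
  rw [integral_eq_mean_of_isQSLawFrom hle hlaw hμ
      (stronglyMeasurable_qsCost cI cII c (stronglyMeasurable_qsPosterior hZ P) hTm)
    (integrable_qsCost_qsPosterior hle hZ hcI hcII hc P hTm hTint)]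
  refine congrArg _ (Finset.sum_congr rfl fun z _ => integral_congr_ae ?_)
  have hpost : ∀ᵐ ω ∂(μ z), ∀ n, 1 ≤ n →
      qsPosterior P Θ Z hZ n ω = qsPosterior (μ z) Θ Z hZ n ω :=
    ae_all_iff.2 fun n => if hn : 1 ≤ n then
        (qsPosterior_ae_eq_of_isQSLawFrom hle hZ hlaw (hμ z) hn).mono fun _ h _ => h
      else ae_of_all _ fun _ h => absurd h hn
  filter_upwards [hpost] with ω hω
  simp only [qsCost, hω (T ω) (hT1 ω)]

theorem qsCostSet_eq_image :
    qsCostSet cI cII c P Θ Z hZ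
      = (fun b : Fin 4 → ℝ => 1 / 4 * ∑ z, b z) ''
          Set.univ.pi fun z => qsCostSet cI cII c (μ z) Θ Z hZ := by
  have hTsm : ∀ {T : Ω → ℕ}, Measurable[qsSigma Θ Z] T →
      StronglyMeasurable[qsSigma Θ Z] (fun ω => (T ω : ℝ)) :=
    fun hT => (measurable_from_top.comp hT).stronglyMeasurable
  ext x
  constructor
  · rintro ⟨T, hT, hT1, hTint, rfl⟩
    have hTint' := (integrable_iff_forall_of_isQSLawFrom hle hlaw hμ
      (hTsm (measurable_qsSigma_of_isStoppingTime hZ hT))).1 hTint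
    exact ⟨_, fun z _ => ⟨T, hT, hT1, hTint' z, rfl⟩,
      (integral_qsCost_eq_mean hle hZ hlaw hμ hcI hcII hc hT hT1 hTint).symm⟩
  · rintro ⟨b, hb, rfl⟩
    choose Ts hTs hTs1 hTsint hbT using fun z => hb z trivial
    set T : Ω → ℕ := fun ω => Ts (Z 1 ω) ω
    have hT : IsStoppingTime (qsFiltration Z hZ) (fun ω => (T ω : WithTop ℕ)) :=
      isStoppingTime_of_measurable_selector (measurable_qsFiltration_Z_one hZ le_rfl) hTs hTs1
    have hTeq : ∀ z, ∀ᵐ ω ∂(μ z), T ω = Ts z ω := fun z =>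
      (ae_Z_one_eq_of_isQSLawFrom hle hlaw (hμ z)).mono fun ω h => by simp only [T, h]
    have hTint : Integrable (fun ω => (T ω : ℝ)) P :=
      (integrable_iff_forall_of_isQSLawFrom hle hlaw hμ
        (hTsm (measurable_qsSigma_of_isStoppingTime hZ hT))).2 fun z =>
          (hTsint z).congr <| (hTeq z).mono fun ω h => by simp only [h]
    refine ⟨T, hT, fun ω => hTs1 _ ω, hTint, ?_⟩
    rw [integral_qsCost_eq_mean hle hZ hlaw hμ hcI hcII hc hT (fun ω => hTs1 _ ω) hTint]
    refine congrArg _ (Finset.sum_congr rfl fun z _ => ?_)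
    rw [hbT z]
    exact integral_congr_ae <| (hTeq z).mono fun ω h => by simp only [qsCost, h]

end Decomposition

theorem quickstop_value_uniform_decomposition_general
    {Ω : Type} [MeasurableSpace Ω] (P : Measure Ω) [IsProbabilityMeasure P]
    (Θ : Ω → Fin 2) (Z : ℕ → Ω → Fin 4)
    (hΘ : Measurable Θ) (hZ : ∀ k, Measurable (Z k))
    (α : Fin 2 → Fin 4 → Fin 4 → ℝ)
    (π₁ : ℝ) (hπ : π₁ ∈ Set.Ioo (0 : ℝ) 1)
    (hlaw : IsQSLaw P Θ Z α π₁)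
    (cI cII c : ℝ) (hcI : 0 < cI) (hcII : 0 < cII) (hc : 0 < c)
    (Pf : ℝ → Fin 4 → Measure Ω)
    (hPf : ∀ π ∈ Set.Icc (0 : ℝ) 1, ∀ z : Fin 4,
      IsProbabilityMeasure (Pf π z) ∧ IsQSLawFrom (Pf π z) Θ Z α π z) :
    sInf {x : ℝ | ∃ T : Ω → ℕ, IsStoppingTime (qsFiltration Z hZ) (fun ω => (T ω : WithTop ℕ)) ∧ (∀ ω, 1 ≤ T ω) ∧
        Integrable (fun ω => (T ω : ℝ)) P ∧
        x = ∫ ω, (qsG cI cII (qsPosterior P Θ Z hZ (T ω) ω)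
              + c * (T ω : ℝ) * qsPosterior P Θ Z hZ (T ω) ω) ∂P}
      = (1 / 4) * ∑ z : Fin 4, qsValue Pf Θ Z hZ cI cII c π₁ z := by
  have hπ₁ : π₁ ∈ Set.Icc (0 : ℝ) 1 := Set.Ioo_subset_Icc_self hπ
  have hprob := fun z => (hPf π₁ hπ₁ z).1
  have hle := qsSigma_le hΘ hZ
  change sInf (qsCostSet cI cII c P Θ Z hZ)
    = 1 / 4 * ∑ z, sInf (qsCostSet cI cII c (Pf π₁ z) Θ Z hZ)
  rw [qsCostSet_eq_image hle hZ hlaw (fun z => (hPf π₁ hπ₁ z).2) hcI.le hcII.le hc.le,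
    csInf_image_mul_sum_pi (fun z => qsCostSet_nonempty cI cII c (Pf π₁ z) Θ Z hZ)
      (fun z => bddBelow_qsCostSet hle hZ hcI.le hcII.le hc.le _) (by norm_num)]

/-- Decomposition of the optimal cost over the uniform initial
observation: under the original model `P` (prior `π₁`, `Z_1` uniform on `Fin 4`),
the minimum expected total cost
`s₁* = inf_T E[g(Π_T) + c T Π_T]` (infimum over a.s. finite stopping times `T ≥ 1`
with `E[T] < ∞` w.r.t. `(F_k)`) satisfies `s₁* = (1/4) ∑_z s₁(π₁, z)`, where
`s₁(π, z)` is the value function of the chain started with belief `π` and initial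
observation `z`. -/
theorem quickstop_value_uniform_decomposition
    {Ω : Type} [MeasurableSpace Ω] (P : Measure Ω) [IsProbabilityMeasure P]
    (Θ : Ω → Fin 2) (Z : ℕ → Ω → Fin 4)
    (hΘ : Measurable Θ) (hZ : ∀ k, Measurable (Z k))
    (α : Fin 2 → Fin 4 → Fin 4 → ℝ)
    (hαpos : ∀ i z z', 0 < α i z' z)
    (hαsum : ∀ i z, ∑ z', α i z' z = 1)
    (π₁ : ℝ) (hπ : π₁ ∈ Set.Ioo (0 : ℝ) 1)
    (hlaw : IsQSLaw P Θ Z α π₁)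
    (cI cII c : ℝ) (hcI : 0 < cI) (hcII : 0 < cII) (hc : 0 < c)
    (Pf : ℝ → Fin 4 → Measure Ω)
    (hPf : ∀ π ∈ Set.Icc (0 : ℝ) 1, ∀ z : Fin 4,
      IsProbabilityMeasure (Pf π z) ∧ IsQSLawFrom (Pf π z) Θ Z α π z) :
    sInf {x : ℝ | ∃ T : Ω → ℕ, IsStoppingTime (qsFiltration Z hZ) (fun ω => (T ω : WithTop ℕ)) ∧ (∀ ω, 1 ≤ T ω) ∧
        Integrable (fun ω => (T ω : ℝ)) P ∧
        x = ∫ ω, (qsG cI cII (qsPosterior P Θ Z hZ (T ω) ω)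
              + c * (T ω : ℝ) * qsPosterior P Θ Z hZ (T ω) ω) ∂P}
      = (1 / 4) * ∑ z : Fin 4, qsValue Pf Θ Z hZ cI cII c π₁ z :=
  quickstop_value_uniform_decomposition_general P Θ Z hΘ hZ α π₁ hπ hlaw cI cII c hcI hcII hc Pf hPf
end
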